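/- arXiv:1608.05480 — 6 statements merged into one kernel-verified Lean document; each statement's English description precedes it below -/
import Mathlib

section
/- The polynomial f(β) = 310β¹⁰ − 3234β⁹ + 17112β⁸ − 49101β⁷ + 76180β⁶ − 58398β⁵ + 10056β⁴ + 15040β³ − 9680β² + 1716β − 4 has exactly one real root β_crit with β_crit > 1, and this root satisfies 1.61 < β_crit < 1.63. -/
/-!
Every estimate is a Taylor expansion in `t = x - a` followed by linear arithmetic on bounds
`0 ≤ tᵏ ≤ dᵏ` for `0 ≤ t ≤ d`. At `a = 1.63` all Taylor coefficients of `fKS` are positive, so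
`fKS > 0` on `[1.63, ∞)`; at `a = 1.61` all of them but the constant one are positive, so `fKS` is
strictly increasing on `[1.61, ∞)`. On each piece `[a, a + d]` of a suitable cover of `[1, 1.61]`,
the constant term is negative and outweighs the positive coefficients times `dᵏ`, so `fKS < 0`
there. The intermediate value theorem then gives exactly one root above `1`, and it lies in
`(1.61, 1.63)`.
-/

noncomputable def fKS (β : ℝ) : ℝ :=
  310*β^10 - 3234*β^9 + 17112*β^8 - 49101*β^7 + 76180*β^6 - 58398*β^5
    + 10056*β^4 + 15040*β^3 - 9680*β^2 + 1716*β - 4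

open Set

lemma fKS_neg_of_mem_Icc {x : ℝ} (hx : x ∈ Icc 1 1.61) : fKS x < 0 := by
  obtain ⟨hx₁, hx₂⟩ := hx
  have hcover : (0 ≤ x - 1 ∧ x - 1 ≤ 0.194) ∨ (0 ≤ x - 1.194 ∧ x - 1.194 ≤ 0.229) ∨
      (0 ≤ x - 1.423 ∧ x - 1.423 ≤ 0.157) ∨ (0 ≤ x - 1.58 ∧ x - 1.58 ≤ 0.03) := by
    rcases le_total x 1.194 with h₁ | h₁
    · exact Or.inl ⟨by linarith, by linarith⟩
    rcases le_total x 1.423 with h₂ | h₂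
    · exact Or.inr <| Or.inl ⟨by linarith, by linarith⟩
    rcases le_total x 1.58 with h₃ | h₃
    · exact Or.inr <| Or.inr <| Or.inl ⟨by linarith, by linarith⟩
    · exact Or.inr <| Or.inr <| Or.inr ⟨by linarith, by linarith⟩
  unfold fKS
  rcases hcover with ⟨h0, hd⟩ | ⟨h0, hd⟩ | ⟨h0, hd⟩ | ⟨h0, hd⟩ <;>
  linarith [pow_nonneg h0 2, pow_nonneg h0 3, pow_nonneg h0 4, pow_nonneg h0 5,
    pow_nonneg h0 6, pow_nonneg h0 7, pow_nonneg h0 8, pow_nonneg h0 9, pow_nonneg h0 10,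
    pow_le_pow_left₀ h0 hd 2, pow_le_pow_left₀ h0 hd 3, pow_le_pow_left₀ h0 hd 4,
    pow_le_pow_left₀ h0 hd 5, pow_le_pow_left₀ h0 hd 6, pow_le_pow_left₀ h0 hd 7,
    pow_le_pow_left₀ h0 hd 8, pow_le_pow_left₀ h0 hd 9, pow_le_pow_left₀ h0 hd 10]

lemma fKS_pos_of_le {x : ℝ} (hx : 1.63 ≤ x) : 0 < fKS x := by
  have h0 : 0 ≤ x - 1.63 := by linarith
  unfold fKS
  linarith [pow_nonneg h0 2, pow_nonneg h0 3, pow_nonneg h0 4, pow_nonneg h0 5,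
    pow_nonneg h0 6, pow_nonneg h0 7, pow_nonneg h0 8, pow_nonneg h0 9, pow_nonneg h0 10]

lemma strictMonoOn_fKS : StrictMonoOn fKS (Ici 1.61) := by
  intro x hx y _ hxy
  have h0 : 0 ≤ x - 1.61 := by linarith [mem_Ici.mp hx]
  have hlt : x - 1.61 < y - 1.61 := by linarith
  unfold fKS
  linarith [pow_le_pow_left₀ h0 hlt.le 2, pow_le_pow_left₀ h0 hlt.le 3,
    pow_le_pow_left₀ h0 hlt.le 4, pow_le_pow_left₀ h0 hlt.le 5, pow_le_pow_left₀ h0 hlt.le 6,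
    pow_le_pow_left₀ h0 hlt.le 7, pow_le_pow_left₀ h0 hlt.le 8, pow_le_pow_left₀ h0 hlt.le 9,
    pow_le_pow_left₀ h0 hlt.le 10]

lemma continuous_fKS : Continuous fKS := by
  unfold fKS
  fun_prop

lemma mem_Ioo_of_fKS_eq_zero {β : ℝ} (h1 : 1 < β) (h0 : fKS β = 0) : β ∈ Ioo 1.61 1.63 := by
  constructor
  · by_contra! hle
    exact (fKS_neg_of_mem_Icc ⟨h1.le, hle⟩).ne h0
  · by_contra! hge
    exact (fKS_pos_of_le hge).ne' h0

/-- The polynomial `f` has exactly one real root `β_crit` with `β_crit > 1`,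
and this root satisfies `1.61 < β_crit < 1.63`. -/
theorem stmt_0 :
    (∃! β : ℝ, 1 < β ∧ fKS β = 0) ∧
    (∀ β : ℝ, 1 < β → fKS β = 0 → 1.61 < β ∧ β < 1.63) := by
  refine ⟨?_, fun β h1 h0 => mem_Ioo_of_fKS_eq_zero h1 h0⟩
  obtain ⟨β, hβ, hβ0⟩ : ∃ β ∈ Ioo (1.61 : ℝ) 1.63, fKS β = 0 :=
    intermediate_value_Ioo (by norm_num) continuous_fKS.continuousOn
      ⟨fKS_neg_of_mem_Icc ⟨by norm_num, le_rfl⟩, fKS_pos_of_le le_rfl⟩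
  refine ⟨β, ⟨by linarith [hβ.1], hβ0⟩, fun γ ⟨hγ1, hγ0⟩ => ?_⟩
  exact strictMonoOn_fKS.injOn (mem_Ioo_of_fKS_eq_zero hγ1 hγ0).1.le hβ.1.le (hγ0.trans hβ0.symm)
end

section
/- Let c > 0, β > 1, m = 0, and define γ = 1/(β−1), σ = (β−1)/c². Then the functions u(z) = (1 + σe^{−cz})^{−γ} and w(z) = e^{−cz} u(z)^β satisfy the travelling wave ODE system c u' = w and w'' + c w' − β (w u'/u)' = 0 on ℝ. -/
/-!
Both profiles belong to the family `e^{-ncz} (1 + σ e^{-cz})^p`, which is closed under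
differentiation and products, so every derivative in the system is an explicit combination
of members of the family. Besides `c u' = w`, this gives the first-order identity
`w' + c w - β w u'/u = 0`: the second equation is its derivative.
-/

open Real

noncomputable def expProfile (c σ n p z : ℝ) : ℝ :=
  exp (-n * c * z) * (1 + σ * exp (-c * z)) ^ p

section expProfile

variable {c σ : ℝ}

lemma one_add_mul_exp_pos (hσ : 0 ≤ σ) (z : ℝ) : 0 < 1 + σ * exp (-c * z) := by
  positivity

lemma expProfile_mul (hσ : 0 ≤ σ) (n m p q z : ℝ) :
    expProfile c σ n p z * expProfile c σ m q z = expProfile c σ (n + m) (p + q) z := by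
  simp only [expProfile]
  rw [rpow_add (one_add_mul_exp_pos hσ z), show -(n + m) * c * z = -n * c * z + -m * c * z by ring,
    exp_add]
  ring

lemma expProfile_pos (hσ : 0 ≤ σ) (n p z : ℝ) : 0 < expProfile c σ n p z := by
  unfold expProfile
  have := one_add_mul_exp_pos (c := c) hσ z
  positivity

lemma hasDerivAt_expProfile (hσ : 0 ≤ σ) (n p z : ℝ) :
    HasDerivAt (expProfile c σ n p)
      (-n * c * expProfile c σ n p z - c * σ * p * expProfile c σ (n + 1) (p - 1) z) z := by
  have hE : ∀ k : ℝ, HasDerivAt (fun y => exp (-k * c * y)) (exp (-k * c * z) * (-k * c)) z :=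
    fun k => by simpa using ((hasDerivAt_id z).const_mul (-k * c)).exp
  have hE1 : HasDerivAt (fun y => exp (-c * y)) (exp (-c * z) * (-c)) z := by simpa using hE 1
  have hVp := ((hE1.const_mul σ).const_add 1).rpow_const (p := p)
    (Or.inl (one_add_mul_exp_pos hσ z).ne')
  refine ((hE n).mul hVp).congr_deriv ?_
  unfold expProfile
  rw [show -(n + 1) * c * z = -n * c * z + -c * z by ring, exp_add]
  ring

lemma deriv_expProfile_zero (hσ : 0 ≤ σ) {γ : ℝ} (h : c ^ 2 * σ * γ = 1) (z : ℝ) :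
    deriv (expProfile c σ 0 (-γ)) z = c⁻¹ * expProfile c σ 1 (-γ - 1) z := by
  have hc : c ≠ 0 := by rintro rfl; simp at h
  rw [(hasDerivAt_expProfile hσ 0 (-γ) z).deriv, zero_add]
  field_simp
  linear_combination expProfile c σ 1 (-γ - 1) z * h

lemma deriv_expProfile_one (hσ : 0 ≤ σ) {β γ : ℝ} (hc : c ≠ 0) (h : c ^ 2 * σ * (γ + 1) = β)
    (z : ℝ) :
    deriv (expProfile c σ 1 (-γ - 1)) z
      = -c * expProfile c σ 1 (-γ - 1) z + β * (c⁻¹ * expProfile c σ 2 (-γ - 2) z) := by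
  rw [(hasDerivAt_expProfile hσ 1 (-γ - 1) z).deriv, show (1 : ℝ) + 1 = 2 by norm_num,
    show -γ - 1 - 1 = -γ - 2 by ring]
  field_simp
  linear_combination expProfile c σ 2 (-γ - 2) z * h

lemma expProfile_one_mul_div_zero (hσ : 0 ≤ σ) (a γ z : ℝ) :
    expProfile c σ 1 (-γ - 1) z * (a * expProfile c σ 1 (-γ - 1) z) / expProfile c σ 0 (-γ) z
      = a * expProfile c σ 2 (-γ - 2) z := by
  rw [div_eq_iff (expProfile_pos hσ _ _ z).ne', mul_left_comm, expProfile_mul hσ, mul_assoc,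
    expProfile_mul hσ]
  ring_nf

end expProfile

lemma deriv_deriv_add_mul_sub_mul_deriv_eq_zero {w g : ℝ → ℝ} {a b z : ℝ}
    (hflux : deriv w = fun y => -a * w y + b * g y)
    (hw : DifferentiableAt ℝ w z) (hg : DifferentiableAt ℝ g z) :
    deriv (deriv w) z + a * deriv w z - b * deriv g z = 0 := by
  have h : deriv (deriv w) z = -a * deriv w z + b * deriv g z := by
    conv_lhs => rw [hflux]
    exact ((hw.hasDerivAt.const_mul _).add (hg.hasDerivAt.const_mul _)).deriv
  rw [h]
  ring

/-- For `c > 0`, `β > 1`, `m = 0`, `γ = 1/(β-1)`, `σ = (β-1)/c²`, the profiles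
`u(z) = (1 + σ e^{-cz})^{-γ}`, `w(z) = e^{-cz} u(z)^β` satisfy the travelling
wave ODE system `c u' = w` and `w'' + c w' - β (w u'/u)' = 0` on `ℝ`. -/
theorem stmt_2 (c β γ σ : ℝ) (hc : 0 < c) (hβ : 1 < β)
    (hγ : γ = 1 / (β - 1)) (hσ : σ = (β - 1) / c ^ 2)
    (u w : ℝ → ℝ)
    (hu : ∀ z, u z = (1 + σ * Real.exp (-c * z)) ^ (-γ))
    (hw : ∀ z, w z = Real.exp (-c * z) * (u z) ^ β) :
    (∀ z : ℝ, c * deriv u z = w z) ∧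
    (∀ z : ℝ, deriv (deriv w) z + c * deriv w z
        - β * deriv (fun y => w y * deriv u y / u y) z = 0) := by
  have hσ0 : 0 ≤ σ := by rw [hσ]; positivity
  have hγβ : γ * (β - 1) = 1 := by rw [hγ]; field_simp [(sub_pos.2 hβ).ne']
  have hcσ : c ^ 2 * σ = β - 1 := by rw [hσ]; field_simp
  have hu' : u = expProfile c σ 0 (-γ) := funext fun z => by simp [hu, expProfile]
  have hw' : w = expProfile c σ 1 (-γ - 1) := funext fun z => by
    rw [hw, hu, ← rpow_mul (one_add_mul_exp_pos hσ0 z).le,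
      show -γ * β = -γ - 1 by linear_combination -hγβ]
    simp [expProfile]
  have hdu : deriv u = fun z => c⁻¹ * expProfile c σ 1 (-γ - 1) z :=
    hu' ▸ funext (deriv_expProfile_zero hσ0 (by linear_combination γ * hcσ + hγβ))
  have hg : (fun z => w z * deriv u z / u z) = fun z => c⁻¹ * expProfile c σ 2 (-γ - 2) z := by
    rw [hdu, hw', hu']
    exact funext (expProfile_one_mul_div_zero hσ0 _ _)
  have hflux : deriv w = fun z => -c * w z + β * (w z * deriv u z / u z) := funext fun z => by
    rw [congrFun hg z, hw']
    exact deriv_expProfile_one hσ0 hc.ne' (by linear_combination (γ + 1) * hcσ + hγβ) z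
  refine ⟨fun z => by rw [hdu, hw']; field_simp, fun z => ?_⟩
  refine deriv_deriv_add_mul_sub_mul_deriv_eq_zero hflux ?_ ?_
  · exact hw' ▸ (hasDerivAt_expProfile hσ0 _ _ z).differentiableAt
  · exact hg ▸ ((hasDerivAt_expProfile hσ0 _ _ z).const_mul _).differentiableAt
end

section
/- Let c > 0 and λ = λ₁ + iλ₂ with λ₁ < −c²/2 and λ₂ = ±λ₁(1 + 2λ₁/c²). Then among the roots μ₁ = λ/c, μ₂,₃ = (−c ± √(c² + 4λ))/2 of (μ − λ/c)(μ² + cμ − λ), the two roots with the smaller real parts have equal real parts, i.e. Re(μ₁) equals the real part of one of μ₂, μ₃ and both are less than the real part of the remaining root. -/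
lemma sqrt_eq_aux (c l1 l2 a b : ℝ) (ha : 0 < a)
    (h1 : a ^ 2 - b ^ 2 = c ^ 2 + 4 * l1) (h2 : 2 * (a * b) = 4 * l2) :
    ((c : ℂ) ^ 2 + 4 * ((l1 : ℂ) + (l2 : ℂ) * Complex.I)) ^ (1 / 2 : ℂ)
      = (a : ℂ) + (b : ℂ) * Complex.I := by
  have hw : ((a : ℂ) + (b : ℂ) * Complex.I) ^ (2 : ℕ)
      = (c : ℂ) ^ 2 + 4 * ((l1 : ℂ) + (l2 : ℂ) * Complex.I) := by
    apply Complex.ext <;> simp [pow_two, Complex.ext_iff] <;> nlinarith [h1, h2]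
  have : (1 / 2 : ℂ) = (2⁻¹ : ℂ) := by norm_num
  rw [this, ← hw, Complex.sq_cpow_two_inv (by simpa using ha)]

/-- On the curve `λ₁ < -c²/2`, `λ₂ = ±λ₁(1 + 2λ₁/c²)`, the two spatial
eigenvalues of `M₀⁺(λ)` with the smaller real parts have equal real parts. -/
theorem stmt_7 (c l1 l2 : ℝ) (hc : 0 < c) (h1 : l1 < -c ^ 2 / 2)
    (h2 : l2 = l1 * (1 + 2 * l1 / c ^ 2) ∨ l2 = -(l1 * (1 + 2 * l1 / c ^ 2)))
    (lam μ₁ μ₂ μ₃ : ℂ)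
    (hlam : lam = (l1 : ℂ) + (l2 : ℂ) * Complex.I)
    (hμ₁ : μ₁ = lam / c)
    (hμ₂ : μ₂ = (-c + ((c : ℂ) ^ 2 + 4 * lam) ^ (1 / 2 : ℂ)) / 2)
    (hμ₃ : μ₃ = (-c - ((c : ℂ) ^ 2 + 4 * lam) ^ (1 / 2 : ℂ)) / 2) :
    (μ₁.re = μ₂.re ∧ μ₁.re < μ₃.re) ∨ (μ₁.re = μ₃.re ∧ μ₁.re < μ₂.re) := by
  have hc0 : c ≠ 0 := ne_of_gt hc
  set a : ℝ := -(c ^ 2 + 2 * l1) / c with ha_def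
  have hA : c ^ 2 + 2 * l1 < 0 := by nlinarith
  have ha : 0 < a := by
    rw [ha_def]; exact div_pos (by linarith) hc
  -- choose b according to the sign case
  obtain hl | hl := h2
  · have hsq : ((c : ℂ) ^ 2 + 4 * lam) ^ (1 / 2 : ℂ)
        = (a : ℂ) + ((-2 * l1 / c : ℝ) : ℂ) * Complex.I := by
      rw [hlam]
      apply sqrt_eq_aux c l1 l2 a (-2 * l1 / c) ha
      · rw [ha_def]; field_simp; ring
      · rw [ha_def, hl]; field_simp; ring
    right
    constructor
    · rw [hμ₁, hμ₃, hsq, hlam]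
      simp [Complex.div_re, Complex.normSq, ha_def, ← Complex.ofReal_pow]
      field_simp
      ring
    · rw [hμ₁, hμ₂, hsq, hlam]
      simp [Complex.div_re, Complex.normSq, ha_def, ← Complex.ofReal_pow]
      rw [div_lt_div_iff₀ (by positivity) (by norm_num)]
      field_simp
      nlinarith
  · have hsq : ((c : ℂ) ^ 2 + 4 * lam) ^ (1 / 2 : ℂ)
        = (a : ℂ) + ((2 * l1 / c : ℝ) : ℂ) * Complex.I := by
      rw [hlam]
      apply sqrt_eq_aux c l1 l2 a (2 * l1 / c) ha
      · rw [ha_def]; field_simp; ring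
      · rw [ha_def, hl]; field_simp; ring
    right
    constructor
    · rw [hμ₁, hμ₃, hsq, hlam]
      simp [Complex.div_re, Complex.normSq, ha_def, ← Complex.ofReal_pow]
      field_simp
      ring
    · rw [hμ₁, hμ₂, hsq, hlam]
      simp [Complex.div_re, Complex.normSq, ha_def, ← Complex.ofReal_pow]
      rw [div_lt_div_iff₀ (by positivity) (by norm_num)]
      field_simp
      nlinarith
end

section
/- For c > 0, the polynomial λ²(4λ³ + 4c²λ² + 36c⁴λ + 5c⁶) has a double root at λ = 0, and its three remaining roots all have negative real part. -/
/-- For `c > 0`, the polynomial `λ²(4λ³ + 4c²λ² + 36c⁴λ + 5c⁶)` has a double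
root at `λ = 0`, and its three remaining roots all have negative real part. -/
theorem stmt_15 (c : ℝ) (hc : 0 < c)
    (Q : ℂ → ℂ)
    (hQ : ∀ lam : ℂ, Q lam =
      4 * lam ^ 3 + 4 * (c : ℂ) ^ 2 * lam ^ 2 + 36 * (c : ℂ) ^ 4 * lam
        + 5 * (c : ℂ) ^ 6) :
    (∀ lam : ℂ, lam ^ 2 * Q lam = 0 ↔ lam = 0 ∨ Q lam = 0) ∧
    Q 0 ≠ 0 ∧
    (∀ lam : ℂ, Q lam = 0 → lam.re < 0) := by
  refine ⟨fun lam => by simp [mul_eq_zero, pow_eq_zero_iff], ?_, ?_⟩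
  · rw [hQ 0]
    simp only [ne_eq]
    intro h
    have hc' : (c : ℂ) ≠ 0 := by exact_mod_cast hc.ne'
    simp [hc'] at h
  · intro lam hlam
    rw [hQ lam] at hlam
    set x := lam.re with hx
    set y := lam.im with hy
    have hre := congrArg Complex.re hlam
    have him := congrArg Complex.im hlam
    simp [Complex.ext_iff, pow_succ, Complex.mul_re, Complex.mul_im] at hre him
    rw [← hx, ← hy] at hre him
    by_contra hxn
    push_neg at hxn
    rcases eq_or_ne y 0 with hy0 | hy0
    · rw [hy0] at hre
      nlinarith [pow_pos hc 6, pow_pos hc 4, pow_pos hc 2, sq_nonneg x,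
        mul_nonneg (mul_nonneg hxn hxn) hxn]
    · have hF : 12 * x ^ 2 - 4 * y ^ 2 + 8 * c ^ 2 * x + 36 * c ^ 4 = 0 := by
        have hprod : y * (12 * x ^ 2 - 4 * y ^ 2 + 8 * c ^ 2 * x + 36 * c ^ 4) = 0 := by
          linear_combination him
        exact (mul_eq_zero.mp hprod).resolve_left hy0
      have hy2 : y ^ 2 = 3 * x ^ 2 + 2 * c ^ 2 * x + 9 * c ^ 4 := by linarith
      have key : 32 * x ^ 3 + 32 * c ^ 2 * x ^ 2 + 80 * c ^ 4 * x + 31 * c ^ 6 = 0 := by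
        nlinarith [hre, hy2, sq_nonneg x]
      nlinarith [pow_pos hc 6, pow_pos hc 4, mul_nonneg (mul_nonneg hxn hxn) hxn,
        mul_nonneg hxn (sq_nonneg c), key]
end

section
/- Let c > 0, β > 1, ν ∈ ℝ. Consider the quadratic equation in λ: λ² + (c(2−β)(ik−ν)/(β−1) − (ik−ν)²)λ + βc³(ik−ν)/(β−1)² − (β+1)c²(ik−ν)²/(β−1) + c(ik−ν)³ = 0, with roots λ₁(k), λ₂(k) ordered so that Re λ₁ ≥ Re λ₂. Then lim_{|k|→∞} Re λ₁(k) = −c(cβ/(β−1) + ν) and Re λ₂(k) → −∞ as |k| → ∞. -/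
/-! With `z = ik - ν` the roots have sum `z² - az` and product `bz - dz² + cz³`. Shifting both
by `r = cz + α` with `α = c² + ac - d` kills the `z²` term of the product: `u = r - λ₁` and
`v = r - λ₂` satisfy `uv = Bz + α²`, so `|uv|² = O(k²)`, while `Re (u + v) = k² + O(1)`.
Since `max |u| |v| ≥ |u + v| / 2`, one of `u, v` is `O(1/|k|)`, and the ordering of the real
parts forces it to be `u`. Hence `Re λ₁ → Re r = α - cν`, which for the Keller–Segel
coefficients is `-c(cβ/(β-1) + ν)`, and `Re λ₂ = Re r - Re v → -∞`. -/

open Filter Topology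

theorem vieta_of_forall_sq_add_mul_add_eq {R : Type*} [CommRing R] {p q x y : R}
    (h : ∀ t, t ^ 2 + p * t + q = (t - x) * (t - y)) : x + y = -p ∧ x * y = q := by
  have h0 := h 0
  have h1 := h 1
  constructor
  · linear_combination h1 - h0
  · linear_combination -h0

theorem min_norm_mul_norm_add_le {𝕜 : Type*} [NormedDivisionRing 𝕜] (u v : 𝕜) :
    min ‖u‖ ‖v‖ * ‖u + v‖ ≤ 2 * ‖u * v‖ := by
  rw [norm_mul]
  rcases le_total ‖u‖ ‖v‖ with h | h
  · rw [min_eq_left h]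
    nlinarith [norm_add_le u v, norm_nonneg u]
  · rw [min_eq_right h]
    nlinarith [norm_add_le u v, norm_nonneg v]

namespace Complex

theorem abs_re_le_of_two_norm_mul_le {u v : ℂ} {m : ℝ} (hm : 0 < m) (hle : u.re ≤ v.re)
    (hmul : 2 * ‖u * v‖ ≤ m * (u + v).re) (hadd : 2 * m ≤ (u + v).re) : |u.re| ≤ m := by
  have hre : (u + v).re ≤ ‖u + v‖ := re_le_norm _
  have hmin : min ‖u‖ ‖v‖ ≤ m := by
    refine le_of_mul_le_mul_right ?_ (show 0 < ‖u + v‖ by linarith)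
    calc min ‖u‖ ‖v‖ * ‖u + v‖ ≤ 2 * ‖u * v‖ := min_norm_mul_norm_add_le u v
      _ ≤ m * ‖u + v‖ := by nlinarith
  rw [add_re] at hadd
  rcases min_le_iff.mp hmin with h | h
  · exact (abs_re_le_norm u).trans h
  · have := abs_le.mp ((abs_re_le_norm v).trans h)
    exact abs_le.mpr ⟨by linarith, by linarith⟩

theorem tendsto_re_of_sq_norm_mul_le {ι : Type*} {l : Filter ι} {u v : ι → ℂ}
    (hle : ∀ k, (u k).re ≤ (v k).re) (hadd : Tendsto (fun k => (u k + v k).re) l atTop)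
    {C D : ℝ} (hmul : ∀ k, ‖u k * v k‖ ^ 2 ≤ C * (u k + v k).re + D) :
    Tendsto (fun k => (u k).re) l (𝓝 0) ∧ Tendsto (fun k => (v k).re) l atTop := by
  have hu : Tendsto (fun k => (u k).re) l (𝓝 0) := by
    rw [Metric.tendsto_nhds]
    intro ε hε
    set m := ε / 2
    have hm : 0 < m := by positivity
    filter_upwards [hadd.eventually_ge_atTop (max (max 1 (2 * m)) ((4 * |C| + 4 * |D|) / m ^ 2))]
      with k hk
    set s := (u k + v k).re
    have hs1 : 1 ≤ s := le_of_max_le_left (le_of_max_le_left hk)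
    have hs2 : 2 * m ≤ s := le_of_max_le_right (le_of_max_le_left hk)
    have hs3 : 4 * |C| + 4 * |D| ≤ m ^ 2 * s := by
      have := le_of_max_le_right hk
      rwa [div_le_iff₀' (by positivity)] at this
    have hsq : (2 * ‖u k * v k‖) ^ 2 ≤ (m * s) ^ 2 := by
      nlinarith [hmul k, le_abs_self C, le_abs_self D, abs_nonneg C, abs_nonneg D]
    have hmul' : 2 * ‖u k * v k‖ ≤ m * s :=
      (pow_le_pow_iff_left₀ (by positivity) (by positivity) two_ne_zero).mp hsq
    rw [Real.dist_0_eq_abs]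
    exact (abs_re_le_of_two_norm_mul_le hm (hle k) hmul' hs2).trans_lt (half_lt_self hε)
  refine ⟨hu, ?_⟩
  refine (hadd.atTop_add hu.neg).congr fun k => ?_
  simp only [add_re]
  ring

end Complex

theorem dispersion_shifted_roots_mul {R : Type*} [CommRing R] {a b c d z x y : R}
    (hadd : x + y = -(a * z - z ^ 2)) (hmul : x * y = b * z - d * z ^ 2 + c * z ^ 3) :
    (c * z + (c ^ 2 + a * c - d) - x) * (c * z + (c ^ 2 + a * c - d) - y) =
      ((c ^ 2 + a * c - d) * (2 * c + a) + b) * z + (c ^ 2 + a * c - d) ^ 2 := by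
  linear_combination (-(c * z + (c ^ 2 + a * c - d))) * hadd + hmul

theorem tendsto_re_roots_of_dispersion {ι : Type*} {l : Filter ι} (a b c d ν : ℝ)
    {z x y : ι → ℂ} (hre : ∀ k, (z k).re = -ν) (hz : Tendsto (fun k => ‖z k‖) l atTop)
    (hroots : ∀ k lam, lam ^ 2 + (a * z k - z k ^ 2) * lam + b * z k - d * z k ^ 2 + c * z k ^ 3
      = (lam - x k) * (lam - y k))
    (horder : ∀ k, (y k).re ≤ (x k).re) :
    Tendsto (fun k => (x k).re) l (𝓝 (c ^ 2 + a * c - d - c * ν)) ∧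
      Tendsto (fun k => (y k).re) l atBot := by
  set α := c ^ 2 + a * c - d
  set B := α * (2 * c + a) + b
  set K := 2 * α - (2 * c + a) * ν - 2 * ν ^ 2
  set r : ι → ℂ := fun k => c * z k + α
  have hvieta k := vieta_of_forall_sq_add_mul_add_eq (R := ℂ)
    (p := a * z k - z k ^ 2) (q := b * z k - d * z k ^ 2 + c * z k ^ 3)
    fun t => by rw [← hroots k t]; ring
  have hnorm k : ‖z k‖ ^ 2 = ν ^ 2 + (z k).im ^ 2 := by
    rw [Complex.sq_norm, Complex.normSq_apply, hre]; ring
  have hadd k : ((r k - x k) + (r k - y k)).re = ‖z k‖ ^ 2 + K := by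
    have : (r k - x k) + (r k - y k) = 2 * r k - (x k + y k) := by ring
    simp only [this, (hvieta k).1, r, hnorm, Complex.sub_re, Complex.add_re, Complex.mul_re,
      Complex.neg_re, sq, hre, Complex.ofReal_re, Complex.ofReal_im, Complex.re_ofNat,
      Complex.im_ofNat]
    ring
  have hmul k : ‖(r k - x k) * (r k - y k)‖ ^ 2 =
      B ^ 2 * ((r k - x k) + (r k - y k)).re + ((α ^ 2 - B * ν) ^ 2 - B ^ 2 * (ν ^ 2 + K)) := by
    have hαC : (α : ℂ) = c ^ 2 + a * c - d := by simp [α]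
    have hBC : (B : ℂ) = α * (2 * c + a) + b := by simp [B]
    have hshift : (r k - x k) * (r k - y k) = B * z k + (α ^ 2 : ℝ) := by
      simp only [r, Complex.ofReal_pow, hαC, hBC]
      exact dispersion_shifted_roots_mul (hvieta k).1 (hvieta k).2
    rw [hadd, hnorm, hshift, Complex.sq_norm, Complex.normSq_apply]
    simp only [Complex.add_re, Complex.add_im, Complex.mul_re, Complex.mul_im, Complex.ofReal_re,
      Complex.ofReal_im, hre]
    ring
  have hlim := Complex.tendsto_re_of_sq_norm_mul_le (fun k => by simp [r]; linarith [horder k])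
    (by simpa only [hadd, Function.comp_def] using
      ((tendsto_pow_atTop two_ne_zero).comp hz).atTop_add tendsto_const_nhds)
    fun k => (hmul k).le
  have hr k : (r k).re = α - c * ν := by simp [r, hre]; ring
  constructor
  · simpa [hr] using hlim.1.const_sub (α - c * ν)
  · refine (tendsto_atBot_add_const_left _ (α - c * ν)
      (tendsto_neg_atTop_atBot.comp hlim.2)).congr fun k => ?_
    simp [hr]

theorem stmt_16_general (β c ν : ℝ) (hβ : 1 < β)
    (l1 l2 : ℝ → ℂ)
    (hroots : ∀ k : ℝ, ∀ lam : ℂ,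
      lam ^ 2
        + ((c * (2 - β) / (β - 1) : ℝ) * (Complex.I * k - ν)
            - (Complex.I * (k : ℂ) - (ν : ℂ)) ^ 2) * lam
        + (β * c ^ 3 / (β - 1) ^ 2 : ℝ) * (Complex.I * k - ν)
        - ((β + 1) * c ^ 2 / (β - 1) : ℝ) * (Complex.I * (k : ℂ) - (ν : ℂ)) ^ 2
        + (c : ℂ) * (Complex.I * (k : ℂ) - (ν : ℂ)) ^ 3
      = (lam - l1 k) * (lam - l2 k))
    (horder : ∀ k : ℝ, (l2 k).re ≤ (l1 k).re) :
    Filter.Tendsto (fun k => (l1 k).re) (Filter.atTop ⊔ Filter.atBot)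
      (nhds (-c * (c * β / (β - 1) + ν))) ∧
    Filter.Tendsto (fun k => (l2 k).re) (Filter.atTop ⊔ Filter.atBot)
      Filter.atBot := by
  have hz : Tendsto (fun k : ℝ => ‖Complex.I * k - ν‖) (atTop ⊔ atBot) atTop :=
    tendsto_atTop_mono (fun k => by simpa using Complex.abs_im_le_norm (Complex.I * k - ν))
      (tendsto_abs_atTop_atTop.sup tendsto_abs_atBot_atTop)
  have hlimit : c ^ 2 + c * (2 - β) / (β - 1) * c - (β + 1) * c ^ 2 / (β - 1) - c * ν =
      -c * (c * β / (β - 1) + ν) := by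
    field_simp [sub_ne_zero.mpr hβ.ne']
    ring
  rw [← hlimit]
  exact tendsto_re_roots_of_dispersion _ _ c _ ν (fun k => by simp) hz
    (fun k lam => by rw [← hroots k lam]) horder

/-- Asymptotics of the ordered roots `λ₁, λ₂` of the weighted dispersion
relation of `M₀⁻(λ) + νI` as `|k| → ∞`:
`Re λ₁ → -c(cβ/(β-1) + ν)` and `Re λ₂ → -∞`. -/
theorem stmt_16 (β c ν : ℝ) (hc : 0 < c) (hβ : 1 < β)
    (l1 l2 : ℝ → ℂ)
    (hroots : ∀ k : ℝ, ∀ lam : ℂ,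
      lam ^ 2
        + ((c * (2 - β) / (β - 1) : ℝ) * (Complex.I * k - ν)
            - (Complex.I * (k : ℂ) - (ν : ℂ)) ^ 2) * lam
        + (β * c ^ 3 / (β - 1) ^ 2 : ℝ) * (Complex.I * k - ν)
        - ((β + 1) * c ^ 2 / (β - 1) : ℝ) * (Complex.I * (k : ℂ) - (ν : ℂ)) ^ 2
        + (c : ℂ) * (Complex.I * (k : ℂ) - (ν : ℂ)) ^ 3
      = (lam - l1 k) * (lam - l2 k))
    (horder : ∀ k : ℝ, (l2 k).re ≤ (l1 k).re) :
    Filter.Tendsto (fun k => (l1 k).re) (Filter.atTop ⊔ Filter.atBot)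
      (nhds (-c * (c * β / (β - 1) + ν))) ∧
    Filter.Tendsto (fun k => (l2 k).re) (Filter.atTop ⊔ Filter.atBot)
      Filter.atBot :=
  stmt_16_general β c ν hβ l1 l2 hroots horder
end

section
/- Let c > 0, β + m > 1 with 0 ≤ m ≤ 1, and ε > 0. Substituting the expansion μ = η₋₁/ε + η₀ + O(ε) into the characteristic polynomial of M^{−}_{m,ε} and collecting the leading order in 1/ε yields η₋₁³(η₋₁ + c) = 0; hence the unique singular spatial eigenvalue satisfies μ = −c/ε + O(1) as ε → 0⁺. -/
/-- The characteristic polynomial of the asymptotic matrix `M⁻_{m,ε}` of the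
linearised Keller-Segel operator with small diffusivity `ε`
(a cubic in `μ` plus `ε` times a quartic correction). -/
noncomputable def PcharMinus (β c m : ℝ) (lam : ℂ) (ε : ℝ) (μ : ℂ) : ℂ :=
  μ ^ 2 * ((-c ^ 2 * (β + 2 * m + 1) / (β + m - 1) : ℝ) - lam)
  + μ * ((c ^ 3 * (β + m * (β + m + 2)) : ℝ)
        - ((β - 2) * c * (β + m - 1) : ℝ) * lam) / (((β + m - 1) ^ 2 : ℝ) : ℂ)
  + (c ^ 2 * m * (β + m - 2) / (β + m - 1) ^ 2 : ℝ) * lam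
  - (c ^ 4 * m * (β + m) / (β + m - 1) ^ 3 : ℝ)
  + (c : ℂ) * μ ^ 3 + lam ^ 2
  + (ε : ℂ) * ((c ^ 3 * (m + 1) * (β + m) / (β + m - 1) ^ 3 : ℝ) * μ
      + μ ^ 2 * ((-β * c ^ 2 / (β + m - 1) ^ 2 : ℝ) - lam)
      + (c ^ 2 * m / (β + m - 1) ^ 4 : ℝ)
          * (((β + m - 1) ^ 2 : ℝ) * lam - (c ^ 2 * (β + m) : ℝ))
      - (c * (m + 1) / (β + m - 1) : ℝ) * μ ^ 3
      + μ ^ 4)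

set_option maxHeartbeats 1000000 in
/-- Substituting `μ = ηneg/ε + η0 + O(ε)` into the characteristic polynomial of
`M⁻_{m,ε}` and collecting the leading order in `1/ε` yields
`ηneg³(ηneg + c) = 0`; hence the unique singular spatial eigenvalue satisfies
`μ = -c/ε + O(1)` as `ε → 0⁺`. -/
theorem stmt_19 (β c m : ℝ) (hc : 0 < c) (hβm : 1 < β + m)
    (hm0 : 0 ≤ m) (hm1 : m ≤ 1) (lam : ℂ) (ηneg η0 : ℂ) :
    Filter.Tendsto
      (fun ε : ℝ => (ε : ℂ) ^ 3 * PcharMinus β c m lam ε (ηneg / (ε : ℂ) + η0))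
      (nhdsWithin 0 (Set.Ioi 0)) (nhds (ηneg ^ 3 * (ηneg + c))) ∧
    (ηneg ≠ 0 → ηneg ^ 3 * (ηneg + c) = 0 → ηneg = -c) := by
  constructor
  · -- the smooth reformulation after clearing denominators
    set G : ℝ → ℂ := fun ε =>
      (ε : ℂ) * (ηneg + η0 * ε) ^ 2 * ((-c ^ 2 * (β + 2 * m + 1) / (β + m - 1) : ℝ) - lam)
      + (ε : ℂ) ^ 2 * (ηneg + η0 * ε) * ((c ^ 3 * (β + m * (β + m + 2)) : ℝ)
            - ((β - 2) * c * (β + m - 1) : ℝ) * lam) / (((β + m - 1) ^ 2 : ℝ) : ℂ)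
      + (ε : ℂ) ^ 3 * ((c ^ 2 * m * (β + m - 2) / (β + m - 1) ^ 2 : ℝ) * lam
          - (c ^ 4 * m * (β + m) / (β + m - 1) ^ 3 : ℝ) + lam ^ 2)
      + (c : ℂ) * (ηneg + η0 * ε) ^ 3
      + ((c ^ 3 * (m + 1) * (β + m) / (β + m - 1) ^ 3 : ℝ) : ℂ) * (ε : ℂ) ^ 3 * (ηneg + η0 * ε)
      + (ε : ℂ) ^ 2 * (ηneg + η0 * ε) ^ 2 * ((-β * c ^ 2 / (β + m - 1) ^ 2 : ℝ) - lam)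
      + (ε : ℂ) ^ 4 * ((c ^ 2 * m / (β + m - 1) ^ 4 : ℝ)
          * (((β + m - 1) ^ 2 : ℝ) * lam - (c ^ 2 * (β + m) : ℝ)))
      - ((c * (m + 1) / (β + m - 1) : ℝ) : ℂ) * (ε : ℂ) * (ηneg + η0 * ε) ^ 3
      + (ηneg + η0 * ε) ^ 4 with hG
    have hcont : Continuous G := by
      unfold G
      fun_prop
    have hlim : Filter.Tendsto G (nhdsWithin 0 (Set.Ioi 0)) (nhds (ηneg ^ 3 * (ηneg + c))) := by
      have h0 : G 0 = ηneg ^ 3 * (ηneg + c) := by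
        simp only [hG, Complex.ofReal_zero]
        ring
      have := hcont.tendsto 0
      rw [h0] at this
      exact this.mono_left nhdsWithin_le_nhds
    refine hlim.congr' ?_
    filter_upwards [self_mem_nhdsWithin] with ε (hε : ε ∈ Set.Ioi 0)
    have hε0 : (ε : ℂ) ≠ 0 := by
      exact_mod_cast (ne_of_gt hε)
    have hd : (β + m - 1 : ℝ) ≠ 0 := by linarith
    have hμ : ηneg / (ε : ℂ) + η0 = (ηneg + η0 * ε) / ε := by
      field_simp
    rw [hμ]
    unfold G
    unfold PcharMinus
    set q1 := ((-c ^ 2 * (β + 2 * m + 1) / (β + m - 1) : ℝ) : ℂ)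
    set q2 := ((c ^ 3 * (β + m * (β + m + 2)) : ℝ) : ℂ)
    set q3 := (((β - 2) * c * (β + m - 1) : ℝ) : ℂ)
    set q4 := ((c ^ 2 * m * (β + m - 2) / (β + m - 1) ^ 2 : ℝ) : ℂ)
    set q5 := ((c ^ 4 * m * (β + m) / (β + m - 1) ^ 3 : ℝ) : ℂ)
    set q6 := ((c ^ 3 * (m + 1) * (β + m) / (β + m - 1) ^ 3 : ℝ) : ℂ)
    set q7 := ((-β * c ^ 2 / (β + m - 1) ^ 2 : ℝ) : ℂ)
    set q8 := ((c ^ 2 * m / (β + m - 1) ^ 4 : ℝ) : ℂ)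
    set q9 := ((c * (m + 1) / (β + m - 1) : ℝ) : ℂ)
    set z := (((β + m - 1) ^ 2 : ℝ) : ℂ) with hzdef
    have hz : z ≠ 0 := by
      rw [hzdef]
      exact_mod_cast pow_ne_zero 2 hd
    linear_combination
      (-1 : ℂ) * ((q1 - lam) * (ηneg + η0 * (ε:ℂ)) ^ 2 * (ε:ℂ) * ((ε:ℂ) * (ε:ℂ)⁻¹ + 1)
        + (q2 - q3 * lam) * z⁻¹ * (ηneg + η0 * (ε:ℂ)) * (ε:ℂ) ^ 2
        + (c:ℂ) * (ηneg + η0 * (ε:ℂ)) ^ 3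
            * ((ε:ℂ) ^ 2 * (ε:ℂ)⁻¹ ^ 2 + (ε:ℂ) * (ε:ℂ)⁻¹ + 1)
        + q6 * (ηneg + η0 * (ε:ℂ)) * (ε:ℂ) ^ 3
        + (q7 - lam) * (ηneg + η0 * (ε:ℂ)) ^ 2 * (ε:ℂ) ^ 2 * ((ε:ℂ) * (ε:ℂ)⁻¹ + 1)
        - q9 * (ηneg + η0 * (ε:ℂ)) ^ 3 * (ε:ℂ)
            * ((ε:ℂ) ^ 2 * (ε:ℂ)⁻¹ ^ 2 + (ε:ℂ) * (ε:ℂ)⁻¹ + 1)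
        + (ηneg + η0 * (ε:ℂ)) ^ 4
            * ((ε:ℂ) ^ 3 * (ε:ℂ)⁻¹ ^ 3 + (ε:ℂ) ^ 2 * (ε:ℂ)⁻¹ ^ 2
                + (ε:ℂ) * (ε:ℂ)⁻¹ + 1)) * (mul_inv_cancel₀ hε0)
  · intro hne h
    rcases mul_eq_zero.mp h with h1 | h2
    · exact absurd ((pow_eq_zero_iff (three_ne_zero)).mp h1) hne
    · linear_combination h2
end
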